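/- Let H ∈ (1/2,1) and define the kernel K_H(t,s) = c_H s^{1/2−H} ∫_s^t (u−s)^{H−3/2} u^{H−1/2} du for 0 < s < t ≤ 1, and K_H(t,s) = 0 for s ≥ t. Then for every û ∈ L²([0,1];ℝ) and every t ∈ [0,1], ∫_0^t K_H(t,s) û(s) ds = ∫_0^t (K̇_H û)(r) dr. In particular, the function t ↦ ∫_0^t K_H(t,s) û(s) ds is absolutely continuous on [0,1] with almost-everywhere derivative (K̇_H û)(t) = c_H t^{H−1/2} ∫_0^t (t−s)^{H−3/2} s^{1/2−H} û(s) ds. -/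

import Mathlib

open MeasureTheory Set

noncomputable section

/-- The constant `c_H = (H(2H-1)/B(2-2H, H-1/2))^{1/2}`. -/
def cH (H : ℝ) : ℝ :=
  Real.sqrt (H * (2 * H - 1) /
    (Real.Gamma (2 - 2 * H) * Real.Gamma (H - 1 / 2) / Real.Gamma ((2 - 2 * H) + (H - 1 / 2))))

/-- The operator `K̇_H`:
`(K̇_H f)(t) = c_H t^{H-1/2} ∫_0^t (t-s)^{H-3/2} s^{1/2-H} f(s) ds`. -/
def Kdot (H : ℝ) (f : ℝ → ℝ) (t : ℝ) : ℝ :=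
  cH H * t ^ (H - 1 / 2) *
    ∫ s in Ioo (0 : ℝ) t, (t - s) ^ (H - 3 / 2) * s ^ (1 / 2 - H) * f s

/-- The Cameron–Martin kernel of fBm:
`K_H(t,s) = c_H s^{1/2-H} ∫_s^t (u-s)^{H-3/2} u^{H-1/2} du` for `s < t`, and `0` for
`s ≥ t`. -/
def KHkernel (H t s : ℝ) : ℝ :=
  if s < t then
    cH H * s ^ (1 / 2 - H) * ∫ u in Ioo s t, (u - s) ^ (H - 3 / 2) * u ^ (H - 1 / 2)
  else 0

/-!
Both sides of the identity are iterated integrals, in the two orders, of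
`c_H s^{1/2-H} u(s) (r-s)^{H-3/2} r^{H-1/2}` over `0 < s < r < t`. Fubini applies because this
integrand is dominated by `c_H |s^{1/2-H} u(s)| (r-s)^{H-3/2}`, a convolution integrand of two
functions in `L¹(0,1)`: the first by Cauchy–Schwarz, as `s^{1/2-H} ∈ L²(0,1)` for `H < 1`. The
derivative statement is then Lebesgue's differentiation theorem for the integrable `K̇_H u`.
-/

theorem integrableOn_rpow_mul_of_memLp_two {α : ℝ} (hα : -1 / 2 < α) {u : ℝ → ℝ}
    (hu : MemLp u 2 (volume.restrict (Ioo (0 : ℝ) 1))) :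
    IntegrableOn (fun s => s ^ α * u s) (Ioo 0 1) := by
  have hpow : MemLp (fun s : ℝ => s ^ α) 2 (volume.restrict (Ioo (0 : ℝ) 1)) := by
    refine (memLp_two_iff_integrable_sq
      (by fun_prop : Measurable fun s : ℝ => s ^ α).aestronglyMeasurable).2 ?_
    refine ((intervalIntegral.integrableOn_Ioo_rpow_iff one_pos).2
      (by linarith : -1 < 2 * α)).congr_fun (fun s hs => ?_) measurableSet_Ioo
    rw [← Real.rpow_natCast, ← Real.rpow_mul hs.1.le, mul_comm]
    norm_num
  exact hpow.integrable_mul hu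

def KHintegrand (H : ℝ) (u : ℝ → ℝ) (r s : ℝ) : ℝ :=
  if s < r then cH H * (s ^ (1 / 2 - H) * u s) * ((r - s) ^ (H - 3 / 2) * r ^ (H - 1 / 2))
  else 0

variable {H : ℝ} {u : ℝ → ℝ} {t : ℝ}

theorem setIntegral_KHintegrand_eq_Kdot {r : ℝ} (hr : r ∈ Ioo 0 t) :
    ∫ s in Ioo 0 t, KHintegrand H u r s = Kdot H u r := by
  rw [setIntegral_eq_of_subset_of_forall_sdiff_eq_zero measurableSet_Ioo
      (Ioo_subset_Ioo_right hr.2.le) fun s hs => by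
        rw [KHintegrand, if_neg fun hsr => hs.2 ⟨hs.1.1, hsr⟩],
    Kdot, ← integral_const_mul]
  refine setIntegral_congr_fun measurableSet_Ioo fun s hs => ?_
  rw [KHintegrand, if_pos hs.2]
  ring

theorem setIntegral_KHintegrand_eq_KHkernel_mul {s : ℝ} (hs : s ∈ Ioo 0 t) :
    ∫ r in Ioo 0 t, KHintegrand H u r s = KHkernel H t s * u s := by
  rw [setIntegral_eq_of_subset_of_forall_sdiff_eq_zero measurableSet_Ioo
      (Ioo_subset_Ioo_left hs.1.le) fun r hr => by
        rw [KHintegrand, if_neg fun hsr => hr.2 ⟨hsr, hr.1.2⟩],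
    KHkernel, if_pos hs.2, mul_right_comm, ← integral_const_mul]
  refine setIntegral_congr_fun measurableSet_Ioo fun r hr => ?_
  rw [KHintegrand, if_pos hr.1]
  ring

theorem aestronglyMeasurable_KHintegrand
    (hw : IntegrableOn (fun s => s ^ (1 / 2 - H) * u s) (Ioo 0 1)) (ht : t ≤ 1) :
    AEStronglyMeasurable (Function.uncurry (KHintegrand H u))
      ((volume.restrict (Ioo 0 t)).prod (volume.restrict (Ioo 0 t))) := by
  have hws : AEStronglyMeasurable (fun p : ℝ × ℝ => p.2 ^ (1 / 2 - H) * u p.2)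
      ((volume.restrict (Ioo 0 t)).prod (volume.restrict (Ioo 0 t))) :=
    (hw.mono_set (Ioo_subset_Ioo_right ht)).aestronglyMeasurable.comp_snd
  exact AEStronglyMeasurable.piecewise (s := {p : ℝ × ℝ | p.2 < p.1})
    (measurableSet_lt measurable_snd measurable_fst)
    ((aestronglyMeasurable_const.mul hws).mul (by fun_prop : Measurable fun p : ℝ × ℝ =>
      (p.1 - p.2) ^ (H - 3 / 2) * p.1 ^ (H - 1 / 2)).aestronglyMeasurable).restrict
    aestronglyMeasurable_const

theorem integrable_KHintegrand (hH : 1 / 2 < H)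
    (hw : IntegrableOn (fun s => s ^ (1 / 2 - H) * u s) (Ioo 0 1)) (ht : t ≤ 1) :
    Integrable (Function.uncurry (KHintegrand H u))
      ((volume.restrict (Ioo 0 t)).prod (volume.restrict (Ioo 0 t))) := by
  set w := (Ioo (0 : ℝ) 1).indicator fun s => s ^ (1 / 2 - H) * u s
  set k := (Ioo (0 : ℝ) 1).indicator fun x : ℝ => x ^ (H - 3 / 2)
  have hw' : Integrable w := (integrable_indicator_iff measurableSet_Ioo).2 hw
  have hk : Integrable k := (integrable_indicator_iff measurableSet_Ioo).2
    ((intervalIntegral.integrableOn_Ioo_rpow_iff one_pos).2 (by linarith))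
  have hmeas := aestronglyMeasurable_KHintegrand hw ht
  have hconv : Integrable (fun p : ℝ × ℝ => cH H * (‖w p.2‖ * k (p.1 - p.2))) :=
    (hw'.norm.convolution_integrand (ContinuousLinearMap.mul ℝ ℝ) hk).const_mul _
  rw [Measure.prod_restrict] at hmeas ⊢
  refine (hconv.restrict (s := Ioo 0 t ×ˢ Ioo 0 t)).mono' hmeas ?_
  filter_upwards [ae_restrict_mem (measurableSet_Ioo.prod measurableSet_Ioo)]
    with ⟨r, s⟩ ⟨hr, hs⟩
  have hcH : 0 ≤ cH H := Real.sqrt_nonneg _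
  simp only [Function.uncurry_apply_pair, KHintegrand, w, k]
  split_ifs with hsr
  · have hs1 : s ∈ Ioo (0 : ℝ) 1 := ⟨hs.1, hs.2.trans_le ht⟩
    have hrs1 : r - s ∈ Ioo (0 : ℝ) 1 := ⟨sub_pos.2 hsr, by linarith [hs.1, hr.2]⟩
    rw [indicator_of_mem hs1, indicator_of_mem hrs1, norm_mul, norm_mul, Real.norm_of_nonneg hcH,
      Real.norm_of_nonneg (mul_nonneg (Real.rpow_nonneg hrs1.1.le _) (Real.rpow_nonneg hr.1.le _))]
    calc cH H * ‖s ^ (1 / 2 - H) * u s‖ * ((r - s) ^ (H - 3 / 2) * r ^ (H - 1 / 2))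
        = cH H * (‖s ^ (1 / 2 - H) * u s‖ * (r - s) ^ (H - 3 / 2)) * r ^ (H - 1 / 2) := by ring
      _ ≤ cH H * (‖s ^ (1 / 2 - H) * u s‖ * (r - s) ^ (H - 3 / 2)) :=
        mul_le_of_le_one_right (by positivity)
          (Real.rpow_le_one hr.1.le (by linarith [hr.2]) (by linarith))
  · rw [norm_zero]
    exact mul_nonneg hcH (mul_nonneg (norm_nonneg _)
      (indicator_nonneg (fun x hx => Real.rpow_nonneg hx.1.le _) _))

theorem setIntegral_KHkernel_mul_eq_setIntegral_Kdot (hH : 1 / 2 < H)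
    (hw : IntegrableOn (fun s => s ^ (1 / 2 - H) * u s) (Ioo 0 1)) (ht : t ≤ 1) :
    ∫ s in Ioo 0 t, KHkernel H t s * u s = ∫ r in Ioo 0 t, Kdot H u r :=
  calc ∫ s in Ioo 0 t, KHkernel H t s * u s
      = ∫ s in Ioo 0 t, ∫ r in Ioo 0 t, KHintegrand H u r s :=
        setIntegral_congr_fun measurableSet_Ioo fun _ hs =>
          (setIntegral_KHintegrand_eq_KHkernel_mul hs).symm
    _ = ∫ r in Ioo 0 t, ∫ s in Ioo 0 t, KHintegrand H u r s :=
        (integral_integral_swap (integrable_KHintegrand hH hw ht)).symm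
    _ = ∫ r in Ioo 0 t, Kdot H u r :=
        setIntegral_congr_fun measurableSet_Ioo fun _ hr => setIntegral_KHintegrand_eq_Kdot hr

theorem intervalIntegrable_Kdot (hH : 1 / 2 < H)
    (hw : IntegrableOn (fun s => s ^ (1 / 2 - H) * u s) (Ioo 0 1)) :
    IntervalIntegrable (Kdot H u) volume 0 1 := by
  rw [intervalIntegrable_iff_integrableOn_Ioo_of_le zero_le_one]
  exact IntegrableOn.congr_fun (integrable_KHintegrand hH hw le_rfl).integral_prod_left
    (fun _ hr => setIntegral_KHintegrand_eq_Kdot hr) measurableSet_Ioo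

/-- For `H ∈ (1/2,1)` and `û ∈ L²([0,1];ℝ)`, one has
`∫_0^t K_H(t,s) û(s) ds = ∫_0^t (K̇_H û)(r) dr` for all `t ∈ [0,1]`; in particular
`t ↦ ∫_0^t K_H(t,s) û(s) ds` is absolutely continuous with a.e. derivative `K̇_H û`. -/
theorem KH_integral_eq_integral_Kdot (H : ℝ) (hH : H ∈ Ioo (1 / 2 : ℝ) 1)
    (u : ℝ → ℝ) (hu : MemLp u 2 (volume.restrict (Icc (0 : ℝ) 1))) :
    (∀ t ∈ Icc (0 : ℝ) 1,
        ∫ s in Ioo (0 : ℝ) t, KHkernel H t s * u s = ∫ r in Ioo (0 : ℝ) t, Kdot H u r) ∧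
    ∀ᵐ t ∂(volume.restrict (Icc (0 : ℝ) 1)),
      HasDerivAt (fun τ => ∫ s in Ioo (0 : ℝ) τ, KHkernel H τ s * u s) (Kdot H u t) t := by
  have hw : IntegrableOn (fun s => s ^ (1 / 2 - H) * u s) (Ioo 0 1) :=
    integrableOn_rpow_mul_of_memLp_two (by linarith [hH.2])
      (hu.mono_measure (Measure.restrict_mono Ioo_subset_Icc_self le_rfl))
  have hfubini : ∀ t ∈ Icc (0 : ℝ) 1,
      ∫ s in Ioo (0 : ℝ) t, KHkernel H t s * u s = ∫ r in Ioo (0 : ℝ) t, Kdot H u r :=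
    fun t ht => setIntegral_KHkernel_mul_eq_setIntegral_Kdot hH.1 hw ht.2
  refine ⟨hfubini, ?_⟩
  have hlebesgue := (intervalIntegrable_Kdot hH.1 hw).ae_hasDerivAt_integral
  rw [uIcc_of_le zero_le_one] at hlebesgue
  rw [Measure.restrict_congr_set Ioo_ae_eq_Icc.symm]
  filter_upwards [ae_restrict_mem measurableSet_Ioo, ae_restrict_of_ae hlebesgue]
    with t ht hderiv
  refine (hderiv (Ioo_subset_Icc_self ht) 0 (left_mem_Icc.2 zero_le_one)).congr_of_eventuallyEq ?_
  filter_upwards [isOpen_Ioo.mem_nhds ht] with τ hτ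
  rw [hfubini τ (Ioo_subset_Icc_self hτ), intervalIntegral.integral_of_le hτ.1.le,
    integral_Ioc_eq_integral_Ioo]

end
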